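/- Let k ≥ 1 and let A be a k-letter 1QFA over a finite alphabet Σ with n quantum basis states that recognizes a language L ⊆ Σ* with cut-point λ isolated by ε. Then the number of equivalence classes of Σ* under the Myhill–Nerode equivalence ≡_L (equivalently, the number m of states of the minimal DFA of L) satisfies m ≤ (Σ_{i=0}^{k−1}|Σ|^i)·(1 + 2/ε)^{2n}. -/

import Mathlib

/-!
If two words `x, y` end in the same `k - 1` letters, then on every continuation `z` the
automaton applies the same unitaries to `ψ_x` and `ψ_y`, so `‖ψ_{xz} - ψ_{yz}‖ = ‖ψ_x - ψ_y‖`.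
When `x ≢_L y`, some `z` puts exactly one of `xz, yz` in `L`; their acceptance probabilities
then differ by at least `2ε`, and since `ψ ↦ ‖Pψ‖²` is `2`-Lipschitz on the unit ball,
`‖ψ_x - ψ_y‖ ≥ ε`. Hence, among representatives of distinct Myhill–Nerode classes sharing
a suffix of length `≤ k - 1` (there are `∑_{i<k} |Σ|^i` such suffixes), the final states form
an `ε`-separated set of unit vectors of `ℂⁿ ≅ ℝ²ⁿ`. The balls of radius `ε/2` around them are
disjoint and lie in the ball of radius `1 + ε/2`, so comparing volumes there are at most
`(1 + 2/ε)^(2n)` of them.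
-/

noncomputable section

/-- The `n`-dimensional complex Hilbert space `ℂⁿ`. -/
abbrev QState (n : ℕ) := EuclideanSpace ℂ (Fin n)

/-- Apply a matrix to a vector of `ℂⁿ`. -/
def mApply {n : ℕ} (M : Matrix (Fin n) (Fin n) ℂ) (v : QState n) : QState n :=
  Matrix.toEuclideanLin M v

/-- Myhill–Nerode equivalence: `x ≡_L y` iff `∀ z, xz ∈ L ↔ yz ∈ L`. -/
def mnEquiv {α : Type} (L : Set (List α)) (x y : List α) : Prop :=
  ∀ z : List α, x ++ z ∈ L ↔ y ++ z ∈ L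

/-- Myhill–Nerode equivalence as a setoid. -/
def mnSetoid {α : Type} (L : Set (List α)) : Setoid (List α) where
  r := mnEquiv L
  iseqv := ⟨fun _ _ => Iff.rfl, fun h z => (h z).symm, fun h1 h2 z => (h1 z).trans (h2 z)⟩

/-- A `k`-letter 1QFA. `none : Option Alph` plays the role of the blank symbol `Λ`. -/
structure MultiQFA (Alph : Type) (k n : ℕ) where
  ψ0 : QState n
  ψ0_unit : ‖ψ0‖ = 1
  U : List (Option Alph) → Matrix (Fin n) (Fin n) ℂ
  U_unitary : ∀ w, U w ∈ Matrix.unitaryGroup (Fin n) ℂ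
  P : Matrix (Fin n) (Fin n) ℂ
  P_proj : P.conjTranspose = P ∧ P * P = P

namespace MultiQFA
variable {Alph : Type} {k n : ℕ}

/-- The length-`k` suffix of `Λ^{k-1}` followed by the prefix read so far. -/
def window (k : ℕ) (pre : List Alph) : List (Option Alph) :=
  let l : List (Option Alph) := List.replicate (k - 1) none ++ pre.map some
  l.drop (l.length - k)

/-- `|ψ_x⟩ = U_{w_m} ⋯ U_{w_1} |ψ₀⟩` where `w_i` is the window after `i` letters. -/
def qState (A : MultiQFA Alph k n) (x : List Alph) : QState n :=
  (List.range x.length).foldl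
    (fun v i => mApply (A.U (window k (x.take (i + 1)))) v) A.ψ0

def probAcc (A : MultiQFA Alph k n) (x : List Alph) : ℝ := ‖mApply A.P (A.qState x)‖ ^ 2

def Recognizes (A : MultiQFA Alph k n) (L : Set (List Alph)) (lam ε : ℝ) : Prop :=
  (∀ x ∈ L, lam + ε ≤ A.probAcc x) ∧ (∀ x ∉ L, A.probAcc x ≤ lam - ε)

end MultiQFA

open MeasureTheory
open scoped ENNReal

theorem List.rtake_append_rtake_left {α : Type*} {l₁ l₂ : List α} {m n : ℕ}
    (h : n ≤ m + l₂.length) : (l₁.rtake m ++ l₂).rtake n = (l₁ ++ l₂).rtake n := by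
  simp only [List.rtake, List.length_append, List.length_drop, List.drop_append, List.drop_drop]
  congr 2 <;> omega

theorem List.rtake_append_rtake_right {α : Type*} (l₁ l₂ : List α) (n : ℕ) :
    (l₁ ++ l₂.rtake n).rtake n = (l₁ ++ l₂).rtake n := by
  simp only [List.rtake_eq_reverse_take_reverse, List.reverse_append, List.reverse_reverse,
    List.take_append, List.take_take, List.length_take, List.length_reverse, min_self]
  congr 3
  omega

theorem List.rtake_map {α β : Type*} (f : α → β) (l : List α) (n : ℕ) :
    (l.map f).rtake n = (l.rtake n).map f := by
  simp [List.rtake, List.map_drop]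

def List.rtakeVector {α : Type*} (k : ℕ) (l : List α) : Σ i : Fin (k + 1), List.Vector α i :=
  ⟨⟨(l.rtake k).length, by simp only [List.rtake, List.length_drop]; omega⟩, ⟨l.rtake k, rfl⟩⟩

theorem List.rtake_eq_of_rtakeVector_eq {α : Type*} {k : ℕ} {l₁ l₂ : List α}
    (h : l₁.rtakeVector k = l₂.rtakeVector k) : l₁.rtake k = l₂.rtake k :=
  congrArg (fun s => s.2.toList) h

theorem card_sigma_vector (α : Type*) [Fintype α] (k : ℕ) :
    Fintype.card (Σ i : Fin k, List.Vector α i) = ∑ i ∈ Finset.range k, Fintype.card α ^ i := by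
  rw [Fintype.card_sigma, ← Fin.sum_univ_eq_sum_range]
  simp only [card_vector]

section LinearAlgebra

variable {n : ℕ}

theorem mApply_sub (M : Matrix (Fin n) (Fin n) ℂ) (u v : QState n) :
    mApply M (u - v) = mApply M u - mApply M v :=
  map_sub (Matrix.toEuclideanLin M) u v

theorem mApply_eq_toEuclideanCLM (M : Matrix (Fin n) (Fin n) ℂ) (v : QState n) :
    mApply M v = Matrix.toEuclideanCLM (n := Fin n) (𝕜 := ℂ) M v :=
  rfl

theorem norm_mApply_of_mem_unitaryGroup {U : Matrix (Fin n) (Fin n) ℂ}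
    (hU : U ∈ Matrix.unitaryGroup (Fin n) ℂ) (v : QState n) : ‖mApply U v‖ = ‖v‖ := by
  rw [mApply_eq_toEuclideanCLM]
  exact ContinuousLinearMap.norm_map_of_mem_unitary (Unitary.map_mem Matrix.toEuclideanCLM hU) v

theorem dist_mApply_of_mem_unitaryGroup {U : Matrix (Fin n) (Fin n) ℂ}
    (hU : U ∈ Matrix.unitaryGroup (Fin n) ℂ) (u v : QState n) :
    dist (mApply U u) (mApply U v) = dist u v := by
  rw [dist_eq_norm, dist_eq_norm, ← mApply_sub, norm_mApply_of_mem_unitaryGroup hU]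

theorem norm_mApply_le_of_isStarProjection {P : Matrix (Fin n) (Fin n) ℂ}
    (hP : IsStarProjection P) (v : QState n) : ‖mApply P v‖ ≤ ‖v‖ :=
  calc ‖mApply P v‖ ≤ ‖Matrix.toEuclideanCLM (n := Fin n) (𝕜 := ℂ) P‖ * ‖v‖ := by
        rw [mApply_eq_toEuclideanCLM]
        exact ContinuousLinearMap.le_opNorm _ v
    _ ≤ 1 * ‖v‖ := by gcongr; exact (hP.map Matrix.toEuclideanCLM).norm_le
    _ = ‖v‖ := one_mul _

end LinearAlgebra

theorem abs_norm_sq_sub_norm_sq_le {E : Type*} [SeminormedAddCommGroup E] {u v : E}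
    (hu : ‖u‖ ≤ 1) (hv : ‖v‖ ≤ 1) : |‖u‖ ^ 2 - ‖v‖ ^ 2| ≤ 2 * ‖u - v‖ :=
  calc |‖u‖ ^ 2 - ‖v‖ ^ 2| = |‖u‖ - ‖v‖| * (‖u‖ + ‖v‖) := by
        rw [sq_sub_sq, abs_mul, abs_of_nonneg (by positivity : 0 ≤ ‖u‖ + ‖v‖), mul_comm]
    _ ≤ ‖u - v‖ * 2 := by
        gcongr
        · exact abs_norm_sub_norm_le u v
        · linarith
    _ = 2 * ‖u - v‖ := mul_comm _ _

namespace MultiQFA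

variable {Alph : Type} {k n : ℕ} (A : MultiQFA Alph k n)

theorem qState_append_singleton (x : List Alph) (a : Alph) :
    A.qState (x ++ [a]) = mApply (A.U (window k (x ++ [a]))) (A.qState x) := by
  rw [qState, qState, List.length_append, List.length_singleton, List.range_succ,
    List.foldl_append, List.foldl_cons, List.foldl_nil, List.take_of_length_le (by simp)]
  congr 1
  refine List.foldl_ext _ _ _ fun v i hi => ?_
  rw [List.take_append_of_le_length (by rw [List.mem_range] at hi; omega)]

theorem norm_qState (x : List Alph) : ‖A.qState x‖ = 1 := by
  induction x using List.reverseRecOn with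
  | nil => exact A.ψ0_unit
  | append_singleton x a ih =>
    rw [qState_append_singleton, norm_mApply_of_mem_unitaryGroup (A.U_unitary _), ih]

theorem abs_probAcc_sub_le (x y : List Alph) :
    |A.probAcc x - A.probAcc y| ≤ 2 * dist (A.qState x) (A.qState y) := by
  have hP : IsStarProjection A.P := ⟨A.P_proj.2, A.P_proj.1⟩
  have hnorm (z : List Alph) : ‖mApply A.P (A.qState z)‖ ≤ 1 :=
    (norm_mApply_le_of_isStarProjection hP _).trans (A.norm_qState z).le
  calc |A.probAcc x - A.probAcc y| ≤ 2 * ‖mApply A.P (A.qState x) - mApply A.P (A.qState y)‖ :=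
        abs_norm_sq_sub_norm_sq_le (hnorm x) (hnorm y)
    _ ≤ 2 * dist (A.qState x) (A.qState y) := by
        rw [← mApply_sub, dist_eq_norm]
        gcongr
        exact norm_mApply_le_of_isStarProjection hP _

theorem window_append_eq_of_rtake_eq {x y w : List Alph} (h : x.rtake (k - 1) = y.rtake (k - 1))
    (hw : w ≠ []) : window k (x ++ w) = window k (y ++ w) := by
  -- Since `w ≠ []`, the window reaches back at most `k - 1` letters into the padded `x`.
  have key (x : List Alph) : window k (x ++ w) =
      ((List.replicate (k - 1) none ++ (x.rtake (k - 1)).map some).rtake (k - 1)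
        ++ w.map some).rtake k := by
    have hk : k ≤ k - 1 + (w.map some).length := by
      have := List.length_pos_iff.2 hw
      rw [List.length_map]
      omega
    rw [← List.rtake_map, List.rtake_append_rtake_right, List.rtake_append_rtake_left hk,
      List.append_assoc, ← List.map_append]
    rfl
  rw [key x, key y, h]

theorem dist_qState_append_of_rtake_eq {x y : List Alph} (h : x.rtake (k - 1) = y.rtake (k - 1))
    (z : List Alph) :
    dist (A.qState (x ++ z)) (A.qState (y ++ z)) = dist (A.qState x) (A.qState y) := by
  induction z using List.reverseRecOn with
  | nil => simp only [List.append_nil]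
  | append_singleton z a ih =>
    have hw := window_append_eq_of_rtake_eq h (w := z ++ [a]) (by simp)
    simp only [← List.append_assoc] at hw ⊢
    rw [qState_append_singleton, qState_append_singleton, hw,
      dist_mApply_of_mem_unitaryGroup (A.U_unitary _), ih]

theorem le_dist_qState_of_not_mnEquiv {L : Set (List Alph)} {lam ε : ℝ}
    (hrec : A.Recognizes L lam ε) {x y : List Alph} (h : x.rtake (k - 1) = y.rtake (k - 1))
    (hxy : ¬ mnEquiv L x y) : ε ≤ dist (A.qState x) (A.qState y) := by
  obtain ⟨z, hz⟩ : ∃ z, ¬ (x ++ z ∈ L ↔ y ++ z ∈ L) := by simpa [mnEquiv] using hxy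
  have hgap : 2 * ε ≤ |A.probAcc (x ++ z) - A.probAcc (y ++ z)| := by
    by_cases hx : x ++ z ∈ L
    · have hy : y ++ z ∉ L := fun hy => hz (iff_of_true hx hy)
      linarith [hrec.1 _ hx, hrec.2 _ hy, le_abs_self (A.probAcc (x ++ z) - A.probAcc (y ++ z))]
    · have hy : y ++ z ∈ L := by_contra fun hy => hz (iff_of_false hx hy)
      linarith [hrec.2 _ hx, hrec.1 _ hy, neg_abs_le (A.probAcc (x ++ z) - A.probAcc (y ++ z))]
  have hlip := A.abs_probAcc_sub_le (x ++ z) (y ++ z)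
  rw [A.dist_qState_append_of_rtake_eq h z] at hlip
  linarith

end MultiQFA

theorem card_le_of_norm_le_one_of_pairwise_le_dist {E : Type*} [NormedAddCommGroup E]
    [NormedSpace ℝ E] [FiniteDimensional ℝ E] {ε : ℝ} (hε : 0 < ε) {F : Finset E}
    (hF : ∀ x ∈ F, ‖x‖ ≤ 1) (hsep : (F : Set E).Pairwise fun x y => ε ≤ dist x y) :
    (F.card : ℝ) ≤ (1 + 2 / ε) ^ Module.finrank ℝ E := by
  borelize E
  set μ : Measure E := Measure.addHaar
  set d := Module.finrank ℝ E
  set r := ε / 2 with hr_def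
  have hr : 0 < r := by positivity
  have hvol : (F.card : ℝ≥0∞) * μ (Metric.ball 0 r) ≤ μ (Metric.ball 0 (1 + r)) :=
    calc (F.card : ℝ≥0∞) * μ (Metric.ball 0 r) = ∑ x ∈ F, μ (Metric.ball x r) := by
          simp only [Measure.addHaar_ball_center, Finset.sum_const, nsmul_eq_mul]
      _ = μ (⋃ x ∈ F, Metric.ball x r) := by
          refine (measure_biUnion_finset (fun x hx y hy hxy => ?_)
            fun _ _ => measurableSet_ball).symm
          exact Metric.ball_disjoint_ball (by linarith [hsep hx hy hxy, hr_def])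
      _ ≤ μ (Metric.ball 0 (1 + r)) := by
          refine measure_mono (Set.iUnion₂_subset fun x hx => Metric.ball_subset_ball' ?_)
          rw [dist_zero_right]
          linarith [hF x hx]
  have hball0 : μ (Metric.ball 0 1) ≠ 0 := (Metric.measure_ball_pos μ 0 one_pos).ne'
  rw [Measure.addHaar_ball_of_pos μ _ hr,
    Measure.addHaar_ball_of_pos μ _ (by positivity : 0 < 1 + r), ← mul_assoc,
    ENNReal.mul_le_mul_iff_left hball0 measure_ball_lt_top.ne,
    ← ENNReal.ofReal_natCast, ← ENNReal.ofReal_mul (by positivity),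
    ENNReal.ofReal_le_ofReal_iff (by positivity)] at hvol
  calc (F.card : ℝ) ≤ (1 + r) ^ d / r ^ d := by rwa [le_div_iff₀ (by positivity)]
    _ = (1 + 2 / ε) ^ d := by rw [← div_pow]; congr 1; field_simp; ring

theorem finite_and_natCard_le_of_forall_finset_card_le {Q : Type*} {N : ℝ}
    (h : ∀ F : Finset Q, (F.card : ℝ) ≤ N) : Finite Q ∧ (Nat.card Q : ℝ) ≤ N := by
  have hQ : Finite Q := by
    by_contra hQ
    have := not_finite_iff_infinite.1 hQ
    obtain ⟨F, hF⟩ := Infinite.exists_subset_card_eq Q (⌈N⌉₊ + 1)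
    have := h F
    rw [hF, Nat.cast_add_one] at this
    linarith [Nat.le_ceil N]
  have := Fintype.ofFinite Q
  exact ⟨hQ, by simpa only [Nat.card_eq_fintype_card, Finset.card_univ] using h Finset.univ⟩

theorem finite_and_natCard_le_of_separated_fibers {Q β E : Type*} [Fintype β]
    [NormedAddCommGroup E] [NormedSpace ℝ E] [FiniteDimensional ℝ E] {ε : ℝ} (hε : 0 < ε)
    (f : Q → β) (g : Q → E) (hg : ∀ q, ‖g q‖ ≤ 1)
    (hsep : ∀ q₁ q₂, f q₁ = f q₂ → q₁ ≠ q₂ → ε ≤ dist (g q₁) (g q₂)) :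
    Finite Q ∧ (Nat.card Q : ℝ) ≤ Fintype.card β * (1 + 2 / ε) ^ Module.finrank ℝ E := by
  classical
  refine finite_and_natCard_le_of_forall_finset_card_le fun F => ?_
  set B := (1 + 2 / ε) ^ Module.finrank ℝ E
  have hfiber : ∀ b ∈ F.image f, (F.filter (f · = b)).card ≤ ⌊B⌋₊ := by
    intro b _
    have hsep' : ((F.filter (f · = b) : Finset Q) : Set Q).Pairwise
        fun q₁ q₂ => ε ≤ dist (g q₁) (g q₂) := fun q₁ h₁ q₂ h₂ hne =>
      hsep q₁ q₂ ((Finset.mem_filter.1 h₁).2.trans (Finset.mem_filter.1 h₂).2.symm) hne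
    have hinj : Set.InjOn g (F.filter (f · = b) : Finset Q) := fun q₁ h₁ q₂ h₂ hg₁₂ =>
      by_contra fun hne => by linarith [hsep' h₁ h₂ hne, dist_le_zero.2 hg₁₂]
    rw [← Finset.card_image_of_injOn hinj]
    refine Nat.le_floor (card_le_of_norm_le_one_of_pairwise_le_dist hε ?_ ?_)
    · simp only [Finset.mem_image]
      rintro _ ⟨q, -, rfl⟩
      exact hg q
    · rwa [Finset.coe_image, hinj.pairwise_image]
  calc (F.card : ℝ) ≤ ⌊B⌋₊ * (F.image f).card := by
        exact_mod_cast Finset.card_le_mul_card_image F _ hfiber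
    _ ≤ B * Fintype.card β := by
        gcongr
        · exact Nat.floor_le (by positivity)
        · exact Finset.card_le_univ _
    _ = Fintype.card β * B := mul_comm _ _

theorem stmt_19_general {Alph : Type} [Fintype Alph] {k n : ℕ} (hk : 1 ≤ k)
    (A : MultiQFA Alph k n) (L : Set (List Alph)) (lam ε : ℝ)
    (hε : 0 < ε)
    (hrec : A.Recognizes L lam ε) :
    Finite (Quotient (mnSetoid L)) ∧
    (Nat.card (Quotient (mnSetoid L)) : ℝ)
      ≤ (∑ i ∈ Finset.range k, (Fintype.card Alph : ℝ) ^ i) * (1 + 2 / ε) ^ (2 * n) := by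
  have hdim : Module.finrank ℝ (QState n) = 2 * n := by
    rw [← Module.finrank_mul_finrank ℝ ℂ, Complex.finrank_real_complex, finrank_euclideanSpace,
      Fintype.card_fin]
  have hwords : (Fintype.card (Σ i : Fin (k - 1 + 1), List.Vector Alph i) : ℝ) =
      ∑ i ∈ Finset.range k, (Fintype.card Alph : ℝ) ^ i := by
    rw [card_sigma_vector, Nat.sub_add_cancel hk]
    push_cast
    rfl
  rw [← hdim, ← hwords]
  refine finite_and_natCard_le_of_separated_fibers hε
    (fun q : Quotient (mnSetoid L) => q.out.rtakeVector (k - 1)) (fun q => A.qState q.out)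
    (fun q => (A.norm_qState _).le) fun q₁ q₂ hf hne =>
      A.le_dist_qState_of_not_mnEquiv hrec (List.rtake_eq_of_rtakeVector_eq hf) fun h => hne ?_
  rw [← q₁.out_eq, ← q₂.out_eq]
  exact Quotient.sound h

/-- If a `k`-letter 1QFA with `n` quantum basis states recognizes `L`
with cut-point `lam` isolated by `ε`, then the number of Myhill–Nerode classes of `L`
is at most `(∑_{i=0}^{k−1}|Alph|^i)(1 + 2/ε)^(2n)`. -/
theorem stmt_19 {Alph : Type} [Fintype Alph] {k n : ℕ} (hk : 1 ≤ k)
    (A : MultiQFA Alph k n) (L : Set (List Alph)) (lam ε : ℝ)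
    (hlam : 0 < lam ∧ lam < 1) (hε : 0 < ε)
    (hrec : A.Recognizes L lam ε) :
    Finite (Quotient (mnSetoid L)) ∧
    (Nat.card (Quotient (mnSetoid L)) : ℝ)
      ≤ (∑ i ∈ Finset.range k, (Fintype.card Alph : ℝ) ^ i) * (1 + 2 / ε) ^ (2 * n) :=
  stmt_19_general hk A L lam ε hε hrec

end
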